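/- Let S_1 and S_2 be gauges in ℝ^N and let μ be a finite positive Borel measure on the unit sphere S_{N−1}. Then ∫_{S_{N−1}} h_{S_1 ∩ S_2} dμ = inf { ∫_{S_{N−1}} h_{S_1} dμ_1 + ∫_{S_{N−1}} h_{S_2} dμ_2 }, where the infimum is taken over all pairs of finite positive Borel measures μ_1, μ_2 on S_{N−1} such that μ_1 + μ_2 linearly majorizes μ. -/

import Mathlib

open MeasureTheory RealInnerProductSpace

/-- The support function of `K ⊆ ℝ^N`. -/
noncomputable def suppFn {N : ℕ} (K : Set (EuclideanSpace ℝ (Fin N)))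
    (x : EuclideanSpace ℝ (Fin N)) : ℝ :=
  sSup ((fun y => (inner ℝ x y : ℝ)) '' K)

/-- Linear majorization of finite positive Borel measures on the unit sphere
`S_{N-1} ⊆ ℝ^N`. -/
def LinMajorizes {N : ℕ}
    (μ ν : Measure (Metric.sphere (0 : EuclideanSpace ℝ (Fin N)) 1)) : Prop :=
  ∀ (m : ℕ) (U : Fin m → Set (Metric.sphere (0 : EuclideanSpace ℝ (Fin N)) 1)),
    (∀ k, MeasurableSet (U k)) →
    Pairwise (Function.onFun Disjoint U) →
    (⋃ k, U k) = Set.univ →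
    ∃ μs : Fin m → Measure (Metric.sphere (0 : EuclideanSpace ℝ (Fin N)) 1),
      (∀ k, IsFiniteMeasure (μs k)) ∧ (∑ k, μs k) = μ ∧
      ∀ (k : Fin m) (l : EuclideanSpace ℝ (Fin N)),
        ∫ u, ⟪l, (u : EuclideanSpace ℝ (Fin N))⟫ ∂(μs k) =
          ∫ u in U k, ⟪l, (u : EuclideanSpace ℝ (Fin N))⟫ ∂ν


/-!
`∫ h_{S₁ ∩ S₂} dμ ≤ inf`: if `μ₁ + μ₂` linearly majorizes `μ`, cut the sphere into pieces on
each of which `h_{S₁ ∩ S₂}` is within `ε` of a linear function `⟪y, ·⟫` with `y ∈ S₁ ∩ S₂`.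
Linear majorization transports the integrals of these linear functions piece by piece, so
`∫ h_{S₁ ∩ S₂} dμ ≤ ∫ h_{S₁ ∩ S₂} d(μ₁ + μ₂)`, and `h_{S₁ ∩ S₂} ≤ h_{Sᵢ}`.

`inf ≤ ∫ h_{S₁ ∩ S₂} dμ`: by the analytic Hahn–Banach theorem the infimal convolution
`u ↦ inf_v h_{S₁}(v) + h_{S₂}(u - v)` is at most `h_{S₁ ∩ S₂}`. Hence there is a finitely-valued
measurable `w` on the sphere with `h_{S₁}(w u) + h_{S₂}(u - w u) ≤ h_{S₁ ∩ S₂}(u) + ε`. Push `μ`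
radially along the two summands of `u = w u + (u - w u)`: `μ₁` puts mass `‖w u‖ dμ(u)` at
`w u / ‖w u‖`, and `μ₂` likewise for `u - w u`. Positive homogeneity gives
`∫ h_{S₁} dμ₁ = ∫ h_{S₁}(w u) dμ(u)` (and similarly for `μ₂`). Since the summands add up to `u`,
for any partition the same radial pushes of the restrictions of `μ` to the pieces split
`μ₁ + μ₂` into measures with the linear moments of those restrictions.
-/

open Metric Set Filter Topology Function
open scoped Pointwise

local notation "𝔼" n:max => EuclideanSpace ℝ (Fin n)
local notation "𝕊" n:max => sphere (0 : 𝔼 n) 1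

section SupportFunction

variable {N : ℕ} {K L : Set (𝔼 N)}

theorem bddAbove_image_inner (hK : IsCompact K) (x : 𝔼 N) :
    BddAbove ((fun y => ⟪x, y⟫) '' K) :=
  (hK.image (continuous_const.inner continuous_id)).bddAbove

theorem inner_le_suppFn (hK : IsCompact K) {y : 𝔼 N} (hy : y ∈ K) (x : 𝔼 N) :
    ⟪x, y⟫ ≤ suppFn K x :=
  le_csSup (bddAbove_image_inner hK x) (mem_image_of_mem _ hy)

theorem suppFn_le (hne : K.Nonempty) {x : 𝔼 N} {c : ℝ} (h : ∀ y ∈ K, ⟪x, y⟫ ≤ c) :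
    suppFn K x ≤ c :=
  csSup_le (hne.image _) (forall_mem_image.2 h)

theorem suppFn_nonneg (hK : IsCompact K) (h0 : 0 ∈ K) (x : 𝔼 N) : 0 ≤ suppFn K x := by
  simpa using inner_le_suppFn hK h0 x

theorem suppFn_mono (hL : IsCompact L) (hne : K.Nonempty) (hKL : K ⊆ L) (x : 𝔼 N) :
    suppFn K x ≤ suppFn L x :=
  csSup_le_csSup (bddAbove_image_inner hL x) (hne.image _) (image_mono hKL)

theorem suppFn_smul {c : ℝ} (hc : 0 ≤ c) (x : 𝔼 N) : suppFn K (c • x) = c * suppFn K x := by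
  have : (fun y => ⟪c • x, y⟫) '' K = c • (fun y => ⟪x, y⟫) '' K := by
    simp only [real_inner_smul_left, ← smul_eq_mul, ← image_smul, image_image]
  rw [suppFn, this, Real.sSup_smul_of_nonneg hc, smul_eq_mul, suppFn]

theorem suppFn_zero : suppFn K 0 = 0 := by
  simpa using suppFn_smul (K := K) le_rfl 0

theorem suppFn_add_le (hK : IsCompact K) (hne : K.Nonempty) (x x' : 𝔼 N) :
    suppFn K (x + x') ≤ suppFn K x + suppFn K x' :=
  suppFn_le hne fun y hy => by
    rw [inner_add_left]
    exact add_le_add (inner_le_suppFn hK hy x) (inner_le_suppFn hK hy x')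

theorem suppFn_le_mul_norm (hne : K.Nonempty) {R : ℝ} (hR : ∀ y ∈ K, ‖y‖ ≤ R) (x : 𝔼 N) :
    suppFn K x ≤ R * ‖x‖ :=
  suppFn_le hne fun y hy => calc
    ⟪x, y⟫ ≤ ‖x‖ * ‖y‖ := real_inner_le_norm x y
    _ ≤ R * ‖x‖ := by rw [mul_comm]; gcongr; exact hR y hy

theorem continuous_suppFn (hK : IsCompact K) (hne : K.Nonempty) : Continuous (suppFn K) := by
  obtain ⟨R, hR⟩ := hK.isBounded.exists_norm_le
  refine (LipschitzWith.of_le_add_mul R.toNNReal fun x x' => ?_).continuous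
  calc suppFn K x ≤ suppFn K x' + suppFn K (x - x') := by
        simpa using suppFn_add_le hK hne x' (x - x')
    _ ≤ suppFn K x' + R.toNNReal * dist x x' := by
        grw [suppFn_le_mul_norm hne hR (x - x'), dist_eq_norm, ← R.le_coe_toNNReal]

theorem mem_of_forall_inner_le_suppFn (hK : IsCompact K) (hconv : Convex ℝ K)
    (hne : K.Nonempty) {a : 𝔼 N} (h : ∀ v, ⟪v, a⟫ ≤ suppFn K v) : a ∈ K := by
  by_contra ha
  obtain ⟨f, c, hfK, hfa⟩ := geometric_hahn_banach_closed_point hconv hK.isClosed ha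
  set v := (InnerProductSpace.toDual ℝ (𝔼 N)).symm f
  have hv : ∀ y, ⟪v, y⟫ = f y := fun y => InnerProductSpace.toDual_symm_apply
  have : suppFn K v ≤ c := suppFn_le hne fun y hy => (hv y ▸ hfK y hy).le
  linarith [h v, hv a]

theorem integrable_suppFn_comp {X : Type*} [MeasurableSpace X] {ρ : Measure X}
    (hK : IsCompact K) (h0 : 0 ∈ K) {g : X → 𝔼 N} (hg : Integrable g ρ) :
    Integrable (fun x => suppFn K (g x)) ρ := by
  obtain ⟨R, hR⟩ := hK.isBounded.exists_norm_le
  refine (hg.norm.const_mul R).mono'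
    ((continuous_suppFn hK ⟨0, h0⟩).comp_aestronglyMeasurable hg.1) (.of_forall fun x => ?_)
  rw [Real.norm_of_nonneg (suppFn_nonneg hK h0 _)]
  exact suppFn_le_mul_norm ⟨0, h0⟩ hR _

end SupportFunction

theorem exists_linearMap_le_of_sublinear {E : Type*} [AddCommGroup E] [Module ℝ E] {p : E → ℝ}
    (p_hom : ∀ c : ℝ, 0 < c → ∀ x, p (c • x) = c * p x) (p_add : ∀ x y, p (x + y) ≤ p x + p y)
    (x : E) : ∃ φ : E →ₗ[ℝ] ℝ, φ x = p x ∧ ∀ y, φ y ≤ p y := by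
  have p_zero : p 0 = 0 := by
    have := p_hom 2 two_pos 0
    rw [smul_zero] at this
    linarith
  have p_line : ∀ t : ℝ, t * p x ≤ p (t • x) := by
    intro t
    rcases lt_trichotomy t 0 with ht | rfl | ht
    · have := p_add ((-t) • x) (t • x)
      rw [← add_smul, neg_add_cancel, zero_smul, p_zero, p_hom _ (neg_pos.2 ht)] at this
      linarith
    · simp [p_zero]
    · exact (p_hom t ht x).ge
  have hker : ∀ c : ℝ, c • x = 0 → c • p x = 0 := fun c hc => by
    rcases smul_eq_zero.1 hc with rfl | rfl
    · exact zero_smul ℝ (p x)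
    · rw [p_zero, smul_zero]
  obtain ⟨φ, hφf, hφp⟩ := exists_extension_of_le_sublinear
    (LinearPMap.mkSpanSingleton' x (p x) hker) p p_hom p_add fun ⟨y, hy⟩ => by
      obtain ⟨t, rfl⟩ := Submodule.mem_span_singleton.1 hy
      rw [LinearPMap.mkSpanSingleton'_apply]
      exact p_line t
  refine ⟨φ, ?_, hφp⟩
  exact (hφf ⟨x, Submodule.mem_span_singleton_self x⟩).trans
    (LinearPMap.mkSpanSingleton'_apply_self _ _ _ _)

section InfConvolution

variable {E : Type*} [AddCommGroup E] {f g : E → ℝ}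

noncomputable def infConv (f g : E → ℝ) (x : E) : ℝ := ⨅ y, f y + g (x - y)

variable (hf : ∀ x, 0 ≤ f x) (hg : ∀ x, 0 ≤ g x)
include hf hg

theorem infConv_le (x y : E) : infConv f g x ≤ f y + g (x - y) :=
  ciInf_le ⟨0, forall_mem_range.2 fun z => add_nonneg (hf z) (hg _)⟩ y

theorem infConv_add_le (f_add : ∀ x y, f (x + y) ≤ f x + f y)
    (g_add : ∀ x y, g (x + y) ≤ g x + g y) (x x' : E) :
    infConv f g (x + x') ≤ infConv f g x + infConv f g x' :=
  le_ciInf_add_ciInf fun y y' => calc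
    infConv f g (x + x') ≤ f (y + y') + g ((x - y) + (x' - y')) := by
      simpa [add_sub_add_comm] using infConv_le hf hg (x + x') (y + y')
    _ ≤ f y + g (x - y) + (f y' + g (x' - y')) := by
      linarith [f_add y y', g_add (x - y) (x' - y')]

omit hf hg in
theorem infConv_smul [Module ℝ E] (f_hom : ∀ c : ℝ, 0 < c → ∀ x, f (c • x) = c * f x)
    (g_hom : ∀ c : ℝ, 0 < c → ∀ x, g (c • x) = c * g x) {c : ℝ} (hc : 0 < c) (x : E) :
    infConv f g (c • x) = c * infConv f g x := by
  rw [infConv, infConv, Real.mul_iInf_of_nonneg hc.le,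
    ← (LinearEquiv.smulOfNeZero ℝ E c hc.ne').toEquiv.iInf_comp]
  congr! 1 with y
  simp [← smul_sub, f_hom c hc, g_hom c hc, mul_add]

end InfConvolution

section SupportFunctionOfInter

variable {N : ℕ} {S₁ S₂ : Set (𝔼 N)}
  (h₁c : IsCompact S₁) (h₁conv : Convex ℝ S₁) (h₁0 : (0 : 𝔼 N) ∈ S₁)
  (h₂c : IsCompact S₂) (h₂conv : Convex ℝ S₂) (h₂0 : (0 : 𝔼 N) ∈ S₂)
include h₁c h₁conv h₁0 h₂c h₂conv h₂0

/-- The analytic Hahn–Banach theorem gives a linear minorant `⟪a, ·⟫` of the sublinear function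
`infConv (suppFn S₁) (suppFn S₂)` that touches it at `u`; being below both support functions,
`a` lies in `S₁ ∩ S₂`. -/
theorem infConv_suppFn_le_suppFn_inter (u : 𝔼 N) :
    infConv (suppFn S₁) (suppFn S₂) u ≤ suppFn (S₁ ∩ S₂) u := by
  have hf := suppFn_nonneg h₁c h₁0
  have hg := suppFn_nonneg h₂c h₂0
  obtain ⟨φ, hφu, hφ⟩ := exists_linearMap_le_of_sublinear
    (fun c hc => infConv_smul (fun c hc => suppFn_smul hc.le) (fun c hc => suppFn_smul hc.le) hc)
    (infConv_add_le hf hg (suppFn_add_le h₁c ⟨0, h₁0⟩) (suppFn_add_le h₂c ⟨0, h₂0⟩)) u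
  set a := (InnerProductSpace.toDual ℝ (𝔼 N)).symm (LinearMap.toContinuousLinearMap φ)
  have ha : ∀ v, ⟪v, a⟫ = φ v := fun v => by
    rw [real_inner_comm, InnerProductSpace.toDual_symm_apply]
    rfl
  have ha₁ : a ∈ S₁ := mem_of_forall_inner_le_suppFn h₁c h₁conv ⟨0, h₁0⟩ fun v => by
    simpa [ha, suppFn_zero] using (hφ v).trans (infConv_le hf hg v v)
  have ha₂ : a ∈ S₂ := mem_of_forall_inner_le_suppFn h₂c h₂conv ⟨0, h₂0⟩ fun v => by
    simpa [ha, suppFn_zero] using (hφ v).trans (infConv_le hf hg v 0)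
  rw [← hφu, ← ha]
  exact inner_le_suppFn (h₁c.inter_right h₂c.isClosed) ⟨ha₁, ha₂⟩ u

theorem exists_suppFn_add_suppFn_sub_lt (u : 𝔼 N) {δ : ℝ} (hδ : 0 < δ) :
    ∃ v, suppFn S₁ v + suppFn S₂ (u - v) < suppFn (S₁ ∩ S₂) u + δ :=
  exists_lt_of_ciInf_lt <|
    (infConv_suppFn_le_suppFn_inter h₁c h₁conv h₁0 h₂c h₂conv h₂0 u).trans_lt
      (lt_add_of_pos_right _ hδ)

end SupportFunctionOfInter

section Partitions

variable {X : Type*}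

theorem sum_indicator_const_of_mem {m : ℕ} {U : Fin m → Set X} (hU : Pairwise (Disjoint on U))
    {M : Type*} [AddCommMonoid M] (c : Fin m → M) {k : Fin m} {x : X} (hx : x ∈ U k) :
    ∑ j, (U j).indicator (fun _ => c j) x = c k := by
  rw [Finset.sum_eq_single k (fun j _ hjk => indicator_of_notMem
    (fun hxj => (hU hjk).ne_of_mem hxj hx rfl) _) (by simp), indicator_of_mem hx]

variable [MeasurableSpace X]

theorem exists_measurable_partition_forall [TopologicalSpace X] [CompactSpace X]
    [OpensMeasurableSpace X] {Y : Type*} {P : X → Y → Prop}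
    (h : ∀ x, ∃ y, ∀ᶠ x' in 𝓝 x, P x' y) :
    ∃ (m : ℕ) (U : Fin m → Set X) (y : Fin m → Y), (∀ k, MeasurableSet (U k)) ∧
      Pairwise (Disjoint on U) ∧ (⋃ k, U k) = univ ∧ ∀ k, ∀ x ∈ U k, P x (y k) := by
  choose y hy using h
  set W := fun x => interior {x' | P x' (y x)}
  obtain ⟨t, ht⟩ := isCompact_univ.elim_finite_subcover W (fun _ => isOpen_interior)
    fun x _ => mem_iUnion.2 ⟨x, mem_interior_iff_mem_nhds.2 (hy x)⟩
  set e := t.equivFin.symm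
  refine ⟨t.card, disjointed (W ∘ (↑) ∘ e), y ∘ (↑) ∘ e,
    fun k => disjointedRec (p := MeasurableSet)
      (fun _ _ hs => hs.diff isOpen_interior.measurableSet) isOpen_interior.measurableSet,
    disjoint_disjointed _, ?_, fun k x hx => ?_⟩
  · rw [iUnion_disjointed, eq_univ_iff_forall]
    intro x
    obtain ⟨z, hz, hxz⟩ := mem_iUnion₂.1 (ht (mem_univ x))
    exact mem_iUnion.2 ⟨e.symm ⟨z, hz⟩, by simpa using hxz⟩
  · simpa using interior_subset (disjointed_subset _ k hx)

theorem MeasureTheory.Measure.sum_restrict_of_partition (μ : Measure X) {m : ℕ} {U : Fin m → Set X}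
    (hU : ∀ k, MeasurableSet (U k)) (hd : Pairwise (Disjoint on U)) (hcov : (⋃ k, U k) = univ) :
    ∑ k, μ.restrict (U k) = μ := by
  rw [← Measure.sum_fintype, ← Measure.restrict_iUnion hd hU, hcov, Measure.restrict_univ]

theorem Continuous.integrable_of_compactSpace [TopologicalSpace X] [CompactSpace X]
    [OpensMeasurableSpace X] {μ : Measure X} [IsFiniteMeasure μ] {F : Type*} [NormedAddCommGroup F]
    {f : X → F} (hf : Continuous f) :
    Integrable f μ :=
  hf.integrable_of_hasCompactSupport (.of_compactSpace f)

end Partitions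

section RadialPush

variable {E : Type*} [NormedAddCommGroup E] [NormedSpace ℝ E] [Nonempty (sphere (0 : E) 1)]

open Classical in
/-- The value at `0` is arbitrary: `radialPush` gives it no weight. -/
noncomputable def sphereProj (v : E) : sphere (0 : E) 1 :=
  if hv : v = 0 then Classical.arbitrary _ else ⟨‖v‖⁻¹ • v, by simp [norm_smul, hv]⟩

theorem norm_smul_sphereProj (v : E) : ‖v‖ • (sphereProj v : E) = v := by
  by_cases hv : v = 0
  · simp [hv]
  · simp [sphereProj, hv, smul_smul]

theorem measurable_sphereProj [MeasurableSpace E] [BorelSpace E] :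
    Measurable (sphereProj (E := E)) := by
  refine measurable_of_continuousOn_compl_singleton 0 ?_
  rw [IsInducing.subtypeVal.continuousOn_iff]
  refine ((continuous_norm.continuousOn.inv₀ fun v hv => norm_ne_zero_iff.2 hv).smul
    continuousOn_id).congr fun v hv => ?_
  simp [sphereProj, show v ≠ 0 from hv]

variable [MeasurableSpace E] {X : Type*} [MeasurableSpace X] {ρ : Measure X} {g : X → E}

noncomputable def radialPush (ρ : Measure X) (g : X → E) : Measure (sphere (0 : E) 1) :=
  (ρ.withDensity fun x => ‖g x‖ₑ).map (sphereProj ∘ g)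

theorem isFiniteMeasure_radialPush (hg : Integrable g ρ) : IsFiniteMeasure (radialPush ρ g) := by
  have := isFiniteMeasure_withDensity hg.2.ne
  unfold radialPush
  infer_instance

variable [BorelSpace E]

theorem integral_radialPush (hg : Measurable g) {f : E → ℝ} (hf : Measurable f)
    (f_hom : ∀ c : ℝ, 0 ≤ c → ∀ v, f (c • v) = c * f v) :
    ∫ w, f w ∂(radialPush ρ g) = ∫ x, f (g x) ∂ρ := by
  rw [radialPush, integral_map (measurable_sphereProj.comp hg).aemeasurable
    (hf.comp measurable_subtype_coe).aestronglyMeasurable (f := fun w => f w)]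
  simp only [enorm_eq_nnnorm]
  rw [integral_withDensity_eq_integral_smul hg.nnnorm]
  congr with x
  rw [NNReal.smul_def, coe_nnnorm, smul_eq_mul, ← f_hom _ (norm_nonneg _), comp_apply,
    norm_smul_sphereProj]

theorem radialPush_sum {ι : Type*} [Fintype ι] (ρ : ι → Measure X) (hg : Measurable g) :
    radialPush (∑ i, ρ i) g = ∑ i, radialPush (ρ i) g := by
  simp only [radialPush, ← Measure.sum_fintype, withDensity_sum,
    Measure.map_sum (measurable_sphereProj.comp hg).aemeasurable]

end RadialPush

section Majorization

variable {N : ℕ}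

theorem integrable_suppFn_sphere {K : Set (𝔼 N)} (hK : IsCompact K) (hne : K.Nonempty)
    {μ : Measure (𝕊 N)} [IsFiniteMeasure μ] : Integrable (fun u : 𝕊 N => suppFn K u) μ :=
  ((continuous_suppFn hK hne).comp continuous_subtype_val).integrable_of_compactSpace

theorem linMajorizes_self (μ : Measure (𝕊 N)) [IsFiniteMeasure μ] : LinMajorizes μ μ :=
  fun _ U hU hd hcov =>
    ⟨fun k => μ.restrict (U k), fun _ => inferInstance,
      Measure.sum_restrict_of_partition μ hU hd hcov, fun _ _ => rfl⟩

theorem linMajorizes_radialPush_add [Nonempty (𝕊 N)] {μ : Measure (𝕊 N)} [IsFiniteMeasure μ]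
    {g : 𝕊 N → 𝔼 N} (hg : Measurable g) (hgi : Integrable g μ) :
    LinMajorizes (radialPush μ g + radialPush μ fun u => (u : 𝔼 N) - g u) μ := by
  have hg' : Measurable fun u : 𝕊 N => (u : 𝔼 N) - g u := measurable_subtype_coe.sub hg
  have hgi' : Integrable (fun u : 𝕊 N => (u : 𝔼 N) - g u) μ :=
    continuous_subtype_val.integrable_of_compactSpace.sub hgi
  intro m U hU hd hcov
  have := fun k => isFiniteMeasure_radialPush (hgi.restrict (s := U k))
  have := fun k => isFiniteMeasure_radialPush (hgi'.restrict (s := U k))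
  refine ⟨fun k => radialPush (μ.restrict (U k)) g +
      radialPush (μ.restrict (U k)) fun u => (u : 𝔼 N) - g u,
    fun k => inferInstance, ?_, fun k l => ?_⟩
  · rw [Finset.sum_add_distrib, ← radialPush_sum _ hg, ← radialPush_sum _ hg',
      Measure.sum_restrict_of_partition μ hU hd hcov]
  · have hl : Continuous fun v : 𝔼 N => ⟪l, v⟫ := continuous_const.inner continuous_id
    have hl_hom : ∀ c : ℝ, 0 ≤ c → ∀ v : 𝔼 N, ⟪l, c • v⟫ = c * ⟪l, v⟫ :=
      fun c _ v => real_inner_smul_right l v c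
    have hl' : Continuous fun u : 𝕊 N => ⟪l, (u : 𝔼 N)⟫ := hl.comp continuous_subtype_val
    dsimp only
    rw [integral_add_measure hl'.integrable_of_compactSpace hl'.integrable_of_compactSpace,
      integral_radialPush hg hl.measurable hl_hom, integral_radialPush hg' hl.measurable hl_hom,
      ← integral_add (hgi.restrict.const_inner l) (hgi'.restrict.const_inner l)]
    simp [inner_sub_right]

theorem integral_suppFn_le_of_linMajorizes {K : Set (𝔼 N)} (hK : IsCompact K) (hne : K.Nonempty)
    {μ ν : Measure (𝕊 N)} [IsFiniteMeasure ν] (h : LinMajorizes μ ν) :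
    ∫ u, suppFn K u ∂ν ≤ ∫ u, suppFn K u ∂μ := by
  have hh : Continuous fun u : 𝕊 N => suppFn K u :=
    (continuous_suppFn hK hne).comp continuous_subtype_val
  have hlin : ∀ y : 𝔼 N, Continuous fun u : 𝕊 N => ⟪y, (u : 𝔼 N)⟫ :=
    fun y => continuous_const.inner continuous_subtype_val
  refine le_of_forall_pos_le_add fun ε hε => ?_
  obtain ⟨δ, hδ, hδε⟩ := exists_pos_mul_lt hε (ν.real univ)
  obtain ⟨m, U, y, hU, hd, hcov, hy⟩ := exists_measurable_partition_forall
    (P := fun (u : 𝕊 N) (y : K) => suppFn K u < ⟪(y : 𝔼 N), u⟫ + δ) fun x => by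
      obtain ⟨_, ⟨y, hyK, rfl⟩, hy⟩ := exists_lt_of_lt_csSup
        (hne.image fun y => ⟪(x : 𝔼 N), y⟫) (sub_lt_self (suppFn K x) hδ)
      exact ⟨⟨y, hyK⟩, hh.continuousAt.eventually_lt ((hlin y).add continuous_const).continuousAt
        (by rw [real_inner_comm]; linarith)⟩
  obtain ⟨μs, hfin, hsum, hmom⟩ := h m U hU hd hcov
  have piece : ∀ k, ∫ u in U k, suppFn K u ∂ν ≤ ∫ u, suppFn K u ∂(μs k) + δ * ν.real (U k) :=
    fun k => calc
      ∫ u in U k, suppFn K u ∂ν ≤ ∫ u in U k, (⟪(y k : 𝔼 N), (u : 𝔼 N)⟫ + δ) ∂ν := by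
        exact setIntegral_mono_on (integrable_suppFn_sphere hK hne).integrableOn
          (((hlin _).add continuous_const).integrable_of_compactSpace.integrableOn) (hU k)
          fun u hu => (hy k u hu).le
      _ = ∫ u, ⟪(y k : 𝔼 N), (u : 𝔼 N)⟫ ∂(μs k) + δ * ν.real (U k) := by
        rw [integral_add ((hlin _).integrable_of_compactSpace (μ := ν.restrict (U k)))
          (integrable_const δ), setIntegral_const, hmom, smul_eq_mul, mul_comm]
      _ ≤ ∫ u, suppFn K u ∂(μs k) + δ * ν.real (U k) := by
        have := hfin k
        gcongr
        · exact (hlin _).integrable_of_compactSpace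
        · exact integrable_suppFn_sphere hK hne
        · exact fun u => (real_inner_comm _ _).trans_le (inner_le_suppFn hK (y k).2 _)
  calc ∫ u, suppFn K u ∂ν = ∑ k, ∫ u in U k, suppFn K u ∂ν := by
        rw [← setIntegral_univ, ← hcov,
          integral_iUnion_fintype hU hd fun k => (integrable_suppFn_sphere hK hne).integrableOn]
    _ ≤ ∑ k, (∫ u, suppFn K u ∂(μs k) + δ * ν.real (U k)) := Finset.sum_le_sum fun k _ => piece k
    _ = ∫ u, suppFn K u ∂μ + δ * ν.real univ := by
        rw [Finset.sum_add_distrib, ← integral_finsetSum_measure, hsum, ← Finset.mul_sum,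
          ← measureReal_iUnion_fintype hd hU, hcov]
        exact fun k _ => integrable_suppFn_sphere hK hne
    _ ≤ ∫ u, suppFn K u ∂μ + ε := by linarith

end Majorization

section Gauges

variable {N : ℕ} {S₁ S₂ : Set (𝔼 N)} (h₁c : IsCompact S₁) (h₁0 : (0 : 𝔼 N) ∈ S₁)
  (h₂c : IsCompact S₂) (h₂0 : (0 : 𝔼 N) ∈ S₂)
include h₁c h₁0 h₂c h₂0

theorem integral_suppFn_inter_le_of_linMajorizes {μ μ₁ μ₂ : Measure (𝕊 N)} [IsFiniteMeasure μ]
    [IsFiniteMeasure μ₁] [IsFiniteMeasure μ₂] (h : LinMajorizes (μ₁ + μ₂) μ) :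
    ∫ u, suppFn (S₁ ∩ S₂) u ∂μ ≤ ∫ u, suppFn S₁ u ∂μ₁ + ∫ u, suppFn S₂ u ∂μ₂ := by
  have hc := h₁c.inter_right h₂c.isClosed
  have hne : (S₁ ∩ S₂).Nonempty := ⟨0, h₁0, h₂0⟩
  calc ∫ u, suppFn (S₁ ∩ S₂) u ∂μ ≤ ∫ u, suppFn (S₁ ∩ S₂) u ∂(μ₁ + μ₂) :=
        integral_suppFn_le_of_linMajorizes hc hne h
    _ = ∫ u, suppFn (S₁ ∩ S₂) u ∂μ₁ + ∫ u, suppFn (S₁ ∩ S₂) u ∂μ₂ :=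
        integral_add_measure (integrable_suppFn_sphere hc hne) (integrable_suppFn_sphere hc hne)
    _ ≤ ∫ u, suppFn S₁ u ∂μ₁ + ∫ u, suppFn S₂ u ∂μ₂ := add_le_add
        (integral_mono (integrable_suppFn_sphere hc hne) (integrable_suppFn_sphere h₁c ⟨0, h₁0⟩)
          fun u => suppFn_mono h₁c hne inter_subset_left _)
        (integral_mono (integrable_suppFn_sphere hc hne) (integrable_suppFn_sphere h₂c ⟨0, h₂0⟩)
          fun u => suppFn_mono h₂c hne inter_subset_right _)

theorem exists_linMajorizes_integral_suppFn_le (h₁conv : Convex ℝ S₁) (h₂conv : Convex ℝ S₂)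
    (μ : Measure (𝕊 N)) [IsFiniteMeasure μ] {ε : ℝ} (hε : 0 < ε) :
    ∃ μ₁ μ₂ : Measure (𝕊 N), IsFiniteMeasure μ₁ ∧ IsFiniteMeasure μ₂ ∧
      LinMajorizes (μ₁ + μ₂) μ ∧
      ∫ u, suppFn S₁ u ∂μ₁ + ∫ u, suppFn S₂ u ∂μ₂ ≤ ∫ u, suppFn (S₁ ∩ S₂) u ∂μ + ε := by
  cases isEmpty_or_nonempty (𝕊 N)
  · refine ⟨0, 0, inferInstance, inferInstance, ?_, by simp [μ.eq_zero_of_isEmpty, hε.le]⟩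
    simpa [μ.eq_zero_of_isEmpty] using linMajorizes_self (0 : Measure (𝕊 N))
  have hc := h₁c.inter_right h₂c.isClosed
  have hne : (S₁ ∩ S₂).Nonempty := ⟨0, h₁0, h₂0⟩
  have hh : Continuous fun u : 𝕊 N => suppFn (S₁ ∩ S₂) u :=
    (continuous_suppFn hc hne).comp continuous_subtype_val
  obtain ⟨δ, hδ, hδε⟩ := exists_pos_mul_lt hε (μ.real univ)
  obtain ⟨m, V, v, hV, hd, hcov, hv⟩ := exists_measurable_partition_forall
    (P := fun (u : 𝕊 N) v => suppFn S₁ v + suppFn S₂ (u - v) < suppFn (S₁ ∩ S₂) u + δ)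
    fun x => by
      obtain ⟨v, hv⟩ := exists_suppFn_add_suppFn_sub_lt h₁c h₁conv h₁0 h₂c h₂conv h₂0 x hδ
      refine ⟨v, ContinuousAt.eventually_lt ?_ (hh.add continuous_const).continuousAt hv⟩
      exact (continuous_const.add ((continuous_suppFn h₂c ⟨0, h₂0⟩).comp
        (continuous_subtype_val.sub continuous_const))).continuousAt
  set w : 𝕊 N → 𝔼 N := fun u => ∑ j, (V j).indicator (fun _ => v j) u
  have hw : Measurable w := Finset.measurable_sum _ fun j _ => measurable_const.indicator (hV j)
  have hw' : Measurable fun u : 𝕊 N => (u : 𝔼 N) - w u := measurable_subtype_coe.sub hw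
  have hwi : Integrable w μ :=
    integrable_finsetSum _ fun j _ => (integrable_const _).indicator (hV j)
  have hwi' : Integrable (fun u : 𝕊 N => (u : 𝔼 N) - w u) μ :=
    continuous_subtype_val.integrable_of_compactSpace.sub hwi
  have hw_le : ∀ u, suppFn S₁ (w u) + suppFn S₂ (u - w u) ≤ suppFn (S₁ ∩ S₂) u + δ := fun u => by
    obtain ⟨j, hj⟩ := mem_iUnion.1 (hcov ▸ mem_univ u)
    rw [show w u = v j from sum_indicator_const_of_mem hd v hj]
    exact (hv j u hj).le
  refine ⟨radialPush μ w, radialPush μ fun u => (u : 𝔼 N) - w u, isFiniteMeasure_radialPush hwi,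
    isFiniteMeasure_radialPush hwi', linMajorizes_radialPush_add hw hwi, ?_⟩
  rw [integral_radialPush hw (continuous_suppFn h₁c ⟨0, h₁0⟩).measurable
      fun c hc => suppFn_smul hc,
    integral_radialPush hw' (continuous_suppFn h₂c ⟨0, h₂0⟩).measurable
      fun c hc => suppFn_smul hc,
    ← integral_add (integrable_suppFn_comp h₁c h₁0 hwi) (integrable_suppFn_comp h₂c h₂0 hwi')]
  calc _ ≤ ∫ u, (suppFn (S₁ ∩ S₂) u + δ) ∂μ :=
        integral_mono ((integrable_suppFn_comp h₁c h₁0 hwi).add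
          (integrable_suppFn_comp h₂c h₂0 hwi'))
          ((integrable_suppFn_sphere hc hne).add (integrable_const δ)) hw_le
    _ = ∫ u, suppFn (S₁ ∩ S₂) u ∂μ + μ.real univ * δ := by
        rw [integral_add (integrable_suppFn_sphere hc hne) (integrable_const δ), integral_const,
          smul_eq_mul]
    _ ≤ ∫ u, suppFn (S₁ ∩ S₂) u ∂μ + ε := by linarith

end Gauges

/-- **(5.4.1).**  For gauges `S₁, S₂` in `ℝ^N` and a finite positive Borel
measure `μ` on the unit sphere,
`∫ h_{S₁ ∩ S₂} dμ = inf {∫ h_{S₁} dμ₁ + ∫ h_{S₂} dμ₂}`, the infimum being over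
all pairs of finite positive Borel measures `μ₁, μ₂` such that `μ₁ + μ₂`
linearly majorizes `μ`. -/
theorem integral_suppFn_inter_eq_inf {N : ℕ}
    (S₁ S₂ : Set (EuclideanSpace ℝ (Fin N)))
    (h₁c : IsCompact S₁) (h₁conv : Convex ℝ S₁)
    (h₁0 : (0 : EuclideanSpace ℝ (Fin N)) ∈ S₁)
    (h₂c : IsCompact S₂) (h₂conv : Convex ℝ S₂)
    (h₂0 : (0 : EuclideanSpace ℝ (Fin N)) ∈ S₂)
    (μ : Measure (Metric.sphere (0 : EuclideanSpace ℝ (Fin N)) 1))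
    [IsFiniteMeasure μ] :
    (∫ u, suppFn (S₁ ∩ S₂) (u : EuclideanSpace ℝ (Fin N)) ∂μ) =
      sInf {r : ℝ |
        ∃ μ₁ μ₂ : Measure (Metric.sphere (0 : EuclideanSpace ℝ (Fin N)) 1),
          IsFiniteMeasure μ₁ ∧ IsFiniteMeasure μ₂ ∧
          LinMajorizes (μ₁ + μ₂) μ ∧
          r = (∫ u, suppFn S₁ (u : EuclideanSpace ℝ (Fin N)) ∂μ₁) +
              (∫ u, suppFn S₂ (u : EuclideanSpace ℝ (Fin N)) ∂μ₂)} := by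
  refine le_antisymm (le_csInf ?_ ?_) (le_of_forall_pos_le_add fun ε hε => ?_)
  · exact ⟨_, μ, 0, inferInstance, inferInstance, by simpa using linMajorizes_self μ, rfl⟩
  · rintro r ⟨μ₁, μ₂, _, _, h, rfl⟩
    exact integral_suppFn_inter_le_of_linMajorizes h₁c h₁0 h₂c h₂0 h
  · obtain ⟨μ₁, μ₂, hμ₁, hμ₂, h, hle⟩ :=
      exists_linMajorizes_integral_suppFn_le h₁c h₁0 h₂c h₂0 h₁conv h₂conv μ hε
    refine (csInf_le ⟨0, ?_⟩ ?_).trans hle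
    · rintro r ⟨μ₁, μ₂, _, _, _, rfl⟩
      exact add_nonneg (integral_nonneg fun u => suppFn_nonneg h₁c h₁0 _)
        (integral_nonneg fun u => suppFn_nonneg h₂c h₂0 _)
    · exact ⟨μ₁, μ₂, hμ₁, hμ₂, h, rfl⟩
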